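/- The kernel of the identity operator I : SV → SV ⊂ SV' is the preferred Gaussian e^{Z_V} ∈ SV_ℂ': for all φ, ψ ∈ SV, ⟨ψ|φ⟩ = e^{Z_V}(ψ₊φ₋). -/

import Mathlib

/-!
Both sides are sesquilinear in `(ψ, φ)`, so it suffices to take `ψ = ∏ᵢ xᵢ` and `φ = ∏ⱼ yⱼ`,
for which `ψ₊φ₋` is a product of `k + n` generators. The convolution power `ζᴺ` evaluated on such
a product is a sum over ordered sequences of `N` disjoint two-element subsets of the factors. As
`ζ` vanishes off degree two and on the pairs `x₊x'₊` and `y₋y'₋`, only sequences of mixed pairs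
`(xᵢ, yⱼ)` survive, each weighted by `⟨xᵢ|yⱼ⟩` (Wick's theorem). Every perfect matching arises
from `N!` orderings, so `ζᴺ / N!` contributes the permanent `∑_σ ∏ᵢ ⟨xᵢ|y_σ(i)⟩` when
`N = k = n` and nothing otherwise; this is the canonical inner product.
-/

open scoped ComplexConjugate

noncomputable section

section Defs

variable {V W A : Type} [AddCommGroup V] [Module ℂ V] [CommRing A] [Algebra ℂ A]

/-- `A` (with embedding `ι`) is the symmetric algebra of `V`: universal property. -/
def IsSymmAlg (ι : V →ₗ[ℂ] A) : Prop :=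
  ∀ (B : Type) [CommRing B] [Algebra ℂ B] (f : V →ₗ[ℂ] B),
    ∃! F : A →ₐ[ℂ] B, ∀ v, F (ι v) = f v

/-- The span of `n`-fold products of generators: the degree-`n` part. -/
def GradeOf (gen : W → A) (n : ℕ) : Submodule ℂ A :=
  Submodule.span ℂ {a | ∃ f : Fin n → W, a = ∏ i, gen (f i)}

/-- The algebra is spanned by products of generators. -/
def SpanProdsOf (gen : W → A) : Prop :=
  ∀ x : A, x ∈ Submodule.span ℂ {a | ∃ (n : ℕ) (f : Fin n → W), a = ∏ i, gen (f i)}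

/-- A quadratic: an antilinear functional concentrated in degree 2. -/
def IsQuadOf (gen : W → A) (ζ : A →ₗ⋆[ℂ] ℂ) : Prop :=
  ∀ n : ℕ, n ≠ 2 → ∀ φ ∈ GradeOf gen n, ζ φ = 0

/-- The commutative product on the full antidual induced by the coproduct,
characterized on products of generators. -/
def IsConvProdOf (gen : W → A)
    (mul : (A →ₗ⋆[ℂ] ℂ) → (A →ₗ⋆[ℂ] ℂ) → (A →ₗ⋆[ℂ] ℂ)) : Prop :=
  ∀ (Φ Ψ : A →ₗ⋆[ℂ] ℂ) (n : ℕ) (v : Fin n → W),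
    mul Φ Ψ (∏ i, gen (v i)) =
      ∑ S : Finset (Fin n), Φ (∏ i ∈ S, gen (v i)) * Ψ (∏ i ∈ Sᶜ, gen (v i))

/-- The counit (unit of the antidual algebra): kills products of at least one generator. -/
def IsCounitOf (gen : W → A) (ε : A →ₗ⋆[ℂ] ℂ) : Prop :=
  ∀ (n : ℕ) (v : Fin n → W), ε (∏ i, gen (v i)) = if n = 0 then 1 else 0

/-- Powers of a functional with respect to the convolution product. -/
def powD (mul : (A →ₗ⋆[ℂ] ℂ) → (A →ₗ⋆[ℂ] ℂ) → (A →ₗ⋆[ℂ] ℂ))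
    (ε ζ : A →ₗ⋆[ℂ] ℂ) : ℕ → (A →ₗ⋆[ℂ] ℂ)
  | 0 => ε
  | n + 1 => mul ζ (powD mul ε ζ n)

/-- `E` is the Gaussian `exp ζ = Σ ζⁿ/n!` (a finite sum in each degree). -/
def IsGaussianOf (gen : W → A)
    (mul : (A →ₗ⋆[ℂ] ℂ) → (A →ₗ⋆[ℂ] ℂ) → (A →ₗ⋆[ℂ] ℂ))
    (ε ζ E : A →ₗ⋆[ℂ] ℂ) : Prop :=
  ∀ k : ℕ, ∀ ψ ∈ GradeOf gen k,
    E ψ = ∑ n ∈ Finset.range (k + 1), ((n.factorial : ℂ))⁻¹ * powD mul ε ζ n ψ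

end Defs

section Defs2

variable {V A : Type} [NormedAddCommGroup V] [InnerProductSpace ℂ V]
  [CommRing A] [Algebra ℂ A]

/-- The family of annihilation operators: derivations killing `1` with
`a v (ι w) = ⟨v|w⟩ 1`. -/
def IsAnn (ι : V →ₗ[ℂ] A) (a : V → A →ₗ[ℂ] A) : Prop :=
  ∀ v : V, (∀ x y : A, a v (x * y) = a v x * y + x * a v y) ∧
    a v 1 = 0 ∧ ∀ w : V, a v (ι w) = (inner ℂ v w : ℂ) • (1 : A)

/-- The canonical inner product on the symmetric algebra: graded pieces are
orthogonal and the permanent formula holds. (Antilinear in the first slot.) -/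
def IsCanonInner (ι : V →ₗ[ℂ] A) (Bf : A →ₗ⋆[ℂ] A →ₗ[ℂ] ℂ) : Prop :=
  (∀ (k n : ℕ), k ≠ n → ∀ (x : Fin k → V) (y : Fin n → V),
      Bf (∏ i, ι (x i)) (∏ i, ι (y i)) = 0) ∧
  ∀ (n : ℕ) (x y : Fin n → V),
      Bf (∏ i, ι (x i)) (∏ i, ι (y i)) =
        ∑ p : Equiv.Perm (Fin n), ∏ i, (inner ℂ (x i) (y (p i)) : ℂ)

/-- Iterated annihilation `a(vₙ)⋯a(v₁)φ` (applying `a(v₁)` first). -/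
def iterAnn (a : V → A →ₗ[ℂ] A) : (n : ℕ) → (Fin n → V) → A → A
  | 0, _, φ => φ
  | n + 1, v, φ => a (v (Fin.last n)) (iterAnn a n (fun i => v i.castSucc) φ)

/-- A symmetric bi-antilinear map `V × V → ℂ`. -/
def IsSymAnti (Z : V → V → ℂ) : Prop :=
  (∀ x y, Z x y = Z y x) ∧
  (∀ x y y', Z x (y + y') = Z x y + Z x y') ∧
  (∀ (c : ℂ) (x y : V), Z x (c • y) = conj c * Z x y)

end Defs2

section DefsC

variable {A AC : Type} [CommRing A] [Algebra ℂ A] [CommRing AC] [Algebra ℂ AC]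

/-- An antilinear (conjugate-linear) algebra morphism, such as `φ ↦ φ₋`. -/
def IsAntiAlgHom (m : A → AC) : Prop :=
  (∀ x y : A, m (x + y) = m x + m y) ∧ (∀ (c : ℂ) (x : A), m (c • x) = conj c • m x) ∧
  (∀ x y : A, m (x * y) = m x * m y) ∧ m 1 = 1

end DefsC

open Finset Function Sum

section Wick

variable {α β : Type*} [DecidableEq α] [DecidableEq β] (g : α → β → ℂ)

/-- `wick g N T U` is the sum of `∏ₖ g iₖ jₖ` over all ordered sequences of `N` pairs
`(i₁, j₁), …, (i_N, j_N)` that enumerate `T` and `U` simultaneously. -/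
def wick : ℕ → Finset α → Finset β → ℂ
  | 0, T, U => if T = ∅ ∧ U = ∅ then 1 else 0
  | N + 1, T, U => ∑ i ∈ T, ∑ j ∈ U, g i j * wick N (T.erase i) (U.erase j)

theorem wick_eq_zero_of_card_ne {N : ℕ} {T : Finset α} {U : Finset β}
    (h : #T ≠ N ∨ #U ≠ N) : wick g N T U = 0 := by
  induction N generalizing T U with
  | zero =>
    rw [wick, if_neg]
    exact not_and_or.2 (by simpa using h)
  | succ N ih =>
    refine sum_eq_zero fun i hi => sum_eq_zero fun j hj => ?_
    have := card_pos.2 ⟨i, hi⟩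
    have := card_pos.2 ⟨j, hj⟩
    rw [ih (by rw [card_erase_of_mem hi, card_erase_of_mem hj]; omega), mul_zero]

/-- In other words, `wick g N / N!` obeys the row expansion of a permanent. -/
theorem wick_succ_of_mem {N : ℕ} {T : Finset α} (U : Finset β) {i₀ : α} (hi₀ : i₀ ∈ T) :
    wick g (N + 1) T U = (N + 1) * ∑ j ∈ U, g i₀ j * wick g N (T.erase i₀) (U.erase j) := by
  induction N generalizing T U with
  | zero =>
    rw [wick, sum_eq_single i₀ ?_ (absurd hi₀)]
    · simp
    · intro i hi hne
      refine sum_eq_zero fun j _ => ?_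
      rw [wick_eq_zero_of_card_ne g (Or.inl ?_), mul_zero]
      exact (card_pos.2 ⟨i₀, mem_erase.2 ⟨Ne.symm hne, hi₀⟩⟩).ne'
  | succ N ih =>
    set W := fun j' => g i₀ j' * wick g (N + 1) (T.erase i₀) (U.erase j')
    have hrest : ∑ i ∈ T.erase i₀, ∑ j ∈ U, g i j * wick g (N + 1) (T.erase i) (U.erase j) =
        (N + 1) * ∑ j' ∈ U, W j' := by
      calc _ = ∑ i ∈ T.erase i₀, ∑ j ∈ U, ∑ j' ∈ U.erase j, (N + 1) * (g i₀ j' *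
                (g i j * wick g N ((T.erase i₀).erase i) ((U.erase j').erase j))) := by
            refine sum_congr rfl fun i hi => sum_congr rfl fun j _ => ?_
            rw [ih _ (mem_erase.2 ⟨(ne_of_mem_erase hi).symm, hi₀⟩), mul_sum, mul_sum]
            refine sum_congr rfl fun j' _ => ?_
            rw [erase_right_comm (s := T), erase_right_comm (s := U)]
            ring
        _ = ∑ i ∈ T.erase i₀, ∑ j' ∈ U, ∑ j ∈ U.erase j', (N + 1) * (g i₀ j' *
                (g i j * wick g N ((T.erase i₀).erase i) ((U.erase j').erase j))) :=
            sum_congr rfl fun i _ => sum_comm' fun j j' => by simp only [mem_erase]; grind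
        _ = ∑ j' ∈ U, ∑ i ∈ T.erase i₀, ∑ j ∈ U.erase j', (N + 1) * (g i₀ j' *
                (g i j * wick g N ((T.erase i₀).erase i) ((U.erase j').erase j))) := sum_comm
        _ = (N + 1) * ∑ j' ∈ U, W j' := by
            simp only [W, wick, mul_sum]
    rw [wick, ← add_sum_erase _ _ hi₀, hrest]
    push_cast
    ring

theorem wick_comp_injective {α' β' : Type*} [DecidableEq α'] [DecidableEq β']
    {e : α' → α} {f : β' → β} (he : Injective e) (hf : Injective f)
    (N : ℕ) (T : Finset α') (U : Finset β') :
    wick (fun i j => g (e i) (f j)) N T U = wick g N (T.image e) (U.image f) := by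
  induction N generalizing T U with
  | zero => simp [wick]
  | succ N ih =>
    rw [wick, wick, sum_image he.injOn]
    refine sum_congr rfl fun i _ => ?_
    rw [sum_image hf.injOn]
    refine sum_congr rfl fun j _ => ?_
    rw [ih, image_erase he, image_erase hf]

end Wick

theorem wick_univ_eq_factorial_mul_perm (n : ℕ) (g : Fin n → Fin n → ℂ) :
    wick g n univ univ = n.factorial * ∑ σ : Equiv.Perm (Fin n), ∏ i, g i (σ i) := by
  induction n with
  | zero => simp [wick]
  | succ n ih =>
    have himage (j : Fin (n + 1)) :
        univ.image (Equiv.swap 0 j ∘ Fin.succ) = univ.erase j := by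
      rw [← image_image, Fin.image_succ_univ, compl_singleton,
        image_erase (Equiv.injective _), image_univ_equiv, Equiv.swap_apply_left]
    have hminor (j : Fin (n + 1)) : wick g n (univ.erase 0) (univ.erase j) =
        n.factorial * ∑ σ : Equiv.Perm (Fin n), ∏ i, g i.succ (Equiv.swap 0 j (σ i).succ) := by
      rw [← himage 0, ← himage j, ← wick_comp_injective g _ _, ih]
      · simp
      · exact (Equiv.injective _).comp (Fin.succ_injective n)
      · exact (Equiv.injective _).comp (Fin.succ_injective n)
    have hperm : ∑ σ : Equiv.Perm (Fin (n + 1)), ∏ i, g i (σ i) =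
        ∑ j, ∑ σ : Equiv.Perm (Fin n), g 0 j * ∏ i, g i.succ (Equiv.swap 0 j (σ i).succ) := by
      rw [← Equiv.sum_comp Equiv.Perm.decomposeFin.symm, Fintype.sum_prod_type]
      refine sum_congr rfl fun j _ => sum_congr rfl fun σ _ => ?_
      simp [Fin.prod_univ_succ, Equiv.Perm.decomposeFin_symm_apply_zero,
        Equiv.Perm.decomposeFin_symm_apply_succ]
    rw [wick_succ_of_mem g _ (mem_univ 0), hperm]
    simp only [hminor, Nat.factorial_succ, mul_sum]
    push_cast
    refine sum_congr rfl fun j _ => sum_congr rfl fun σ _ => by ring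

theorem sum_inv_factorial_mul_wick_of_ne {k n : ℕ} (g : Fin k → Fin n → ℂ) (hkn : k ≠ n)
    (M : ℕ) : ∑ N ∈ range M, (N.factorial : ℂ)⁻¹ * wick g N univ univ = 0 := by
  refine sum_eq_zero fun N _ => ?_
  rw [wick_eq_zero_of_card_ne g (by simp only [card_univ, Fintype.card_fin]; omega), mul_zero]

theorem sum_inv_factorial_mul_wick_univ {n M : ℕ} (g : Fin n → Fin n → ℂ) (hM : n < M) :
    ∑ N ∈ range M, (N.factorial : ℂ)⁻¹ * wick g N univ univ =
      ∑ σ : Equiv.Perm (Fin n), ∏ i, g i (σ i) := by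
  rw [sum_eq_single_of_mem n (mem_range.2 hM), wick_univ_eq_factorial_mul_perm,
    inv_mul_cancel_left₀ (Nat.cast_ne_zero.2 n.factorial_ne_zero)]
  intro N _ hN
  rw [wick_eq_zero_of_card_ne g (by simp [hN.symm]), mul_zero]

section ConvolutionAlgebra

variable {W A : Type} [CommRing A] [Algebra ℂ A] {gen : W → A}
  {mul : (A →ₗ⋆[ℂ] ℂ) → (A →ₗ⋆[ℂ] ℂ) → (A →ₗ⋆[ℂ] ℂ)} {ε ζ : A →ₗ⋆[ℂ] ℂ}
  {ι : Type*} [DecidableEq ι]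

theorem Finset.exists_fin_injective_image_eq (T : Finset ι) :
    ∃ (n : ℕ) (w : Fin n → ι), Injective w ∧ univ.image w = T :=
  ⟨#T, (↑) ∘ T.equivFin.symm, Subtype.val_injective.comp T.equivFin.symm.injective,
    by ext a; simpa using ⟨fun ⟨b, hb⟩ => hb ▸ (T.equivFin.symm b).2,
      fun ha => ⟨T.equivFin ⟨a, ha⟩, by simp⟩⟩⟩

theorem prod_mem_gradeOf (T : Finset ι) (u : ι → W) : ∏ i ∈ T, gen (u i) ∈ GradeOf gen #T := by
  obtain ⟨n, w, hw, rfl⟩ := T.exists_fin_injective_image_eq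
  rw [prod_image hw.injOn, card_image_of_injective _ hw, card_univ, Fintype.card_fin]
  exact Submodule.subset_span ⟨u ∘ w, rfl⟩

theorem IsQuadOf.apply_prod_eq_zero (hζ : IsQuadOf gen ζ) {T : Finset ι} (hT : #T ≠ 2)
    (u : ι → W) : ζ (∏ i ∈ T, gen (u i)) = 0 :=
  hζ _ hT _ (prod_mem_gradeOf T u)

theorem IsCounitOf.apply_prod (hε : IsCounitOf gen ε) (T : Finset ι) (u : ι → W) :
    ε (∏ i ∈ T, gen (u i)) = if #T = 0 then 1 else 0 := by
  obtain ⟨n, w, hw, rfl⟩ := T.exists_fin_injective_image_eq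
  rw [prod_image hw.injOn, hε n fun j => u (w j), card_image_of_injective _ hw, card_univ,
    Fintype.card_fin]

theorem IsConvProdOf.apply_prod (hmul : IsConvProdOf gen mul) (Φ Ψ : A →ₗ⋆[ℂ] ℂ)
    (T : Finset ι) (u : ι → W) :
    mul Φ Ψ (∏ i ∈ T, gen (u i)) =
      ∑ S ∈ T.powerset, Φ (∏ i ∈ S, gen (u i)) * Ψ (∏ i ∈ T \ S, gen (u i)) := by
  obtain ⟨n, w, hw, rfl⟩ := T.exists_fin_injective_image_eq
  rw [prod_image hw.injOn, hmul Φ Ψ n fun j => u (w j), powerset_image, powerset_univ,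
    sum_image (image_injective hw).injOn]
  refine sum_congr rfl fun S _ => ?_
  rw [← image_sdiff _ _ hw, prod_image hw.injOn, prod_image hw.injOn, compl_eq_univ_sdiff]

end ConvolutionAlgebra

section WickTheorem

variable {W A : Type} [CommRing A] [Algebra ℂ A] {gen : W → A}
  {mul : (A →ₗ⋆[ℂ] ℂ) → (A →ₗ⋆[ℂ] ℂ) → (A →ₗ⋆[ℂ] ℂ)} {ε ζ E : A →ₗ⋆[ℂ] ℂ}
  {α β : Type*} [DecidableEq α] [DecidableEq β]

theorem Finset.disjSum_sdiff_pair (T : Finset α) (U : Finset β) (i : α) (j : β) :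
    T.disjSum U \ {inl i, inr j} = (T.erase i).disjSum (U.erase j) := by
  ext (a | b) <;> simp <;> tauto

theorem Sum.pair_inl_inr_injective :
    Injective fun q : α × β => ({inl q.1, inr q.2} : Finset (α ⊕ β)) := by
  rintro ⟨i, j⟩ ⟨i', j'⟩ h
  have hi := Finset.ext_iff.1 h (inl i)
  have hj := Finset.ext_iff.1 h (inr j)
  simp only [mem_insert, mem_singleton, or_true, inl.injEq, inr.injEq,
    reduceCtorEq, or_false, false_or, true_iff] at hi hj
  exact Prod.ext hi hj

theorem IsQuadOf.apply_prod_eq_zero_of_ne_pair (hζ : IsQuadOf gen ζ) (u : α ⊕ β → W)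
    (hll : ∀ i i', ζ (gen (u (inl i)) * gen (u (inl i'))) = 0)
    (hrr : ∀ j j', ζ (gen (u (inr j)) * gen (u (inr j'))) = 0)
    {S : Finset (α ⊕ β)} (hS : ∀ i j, S ≠ {inl i, inr j}) : ζ (∏ c ∈ S, gen (u c)) = 0 := by
  by_cases hc : #S = 2
  · obtain ⟨a, b, hab, rfl⟩ := card_eq_two.1 hc
    rw [prod_pair hab]
    rcases a with i | j <;> rcases b with i' | j'
    · exact hll i i'
    · exact absurd rfl (hS i j')
    · exact absurd (pair_comm _ _) (hS i' j)
    · exact hrr j j'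
  · exact hζ.apply_prod_eq_zero hc u

theorem powD_apply_prod_disjSum (hmul : IsConvProdOf gen mul) (hε : IsCounitOf gen ε)
    (hζ : IsQuadOf gen ζ) (u : α ⊕ β → W)
    (hll : ∀ i i', ζ (gen (u (inl i)) * gen (u (inl i'))) = 0)
    (hrr : ∀ j j', ζ (gen (u (inr j)) * gen (u (inr j'))) = 0)
    (N : ℕ) (T : Finset α) (U : Finset β) :
    powD mul ε ζ N (∏ c ∈ T.disjSum U, gen (u c)) =
      wick (fun i j => ζ (gen (u (inl i)) * gen (u (inr j)))) N T U := by
  induction N generalizing T U with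
  | zero =>
    rw [powD, hε.apply_prod]
    simp [wick, card_disjSum]
  | succ N ih =>
    let pair := fun q : α × β => ({inl q.1, inr q.2} : Finset (α ⊕ β))
    have hsub : (T ×ˢ U).image pair ⊆ (T.disjSum U).powerset := by
      rintro _ hS
      obtain ⟨⟨i, j⟩, hij, rfl⟩ := mem_image.1 hS
      simpa [pair, insert_subset_iff] using hij
    rw [powD, hmul.apply_prod, ← sum_subset hsub ?_, sum_image Sum.pair_inl_inr_injective.injOn,
      sum_product, wick]
    · refine sum_congr rfl fun i _ => sum_congr rfl fun j _ => ?_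
      rw [prod_pair (by simp), disjSum_sdiff_pair, ih]
    · intro S hS hSpair
      rw [hζ.apply_prod_eq_zero_of_ne_pair u hll hrr, zero_mul]
      rintro i j rfl
      exact hSpair (mem_image.2 ⟨(i, j), by simpa [insert_subset_iff] using hS, rfl⟩)

theorem IsGaussianOf.apply_prod_sum_type (hE : IsGaussianOf gen mul ε ζ E)
    (hmul : IsConvProdOf gen mul) (hε : IsCounitOf gen ε) (hζ : IsQuadOf gen ζ)
    {k n : ℕ} (u : Fin k ⊕ Fin n → W)
    (hll : ∀ i i', ζ (gen (u (inl i)) * gen (u (inl i'))) = 0)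
    (hrr : ∀ j j', ζ (gen (u (inr j)) * gen (u (inr j'))) = 0) :
    E (∏ c, gen (u c)) = ∑ N ∈ range (k + n + 1), (N.factorial : ℂ)⁻¹ *
      wick (fun i j => ζ (gen (u (inl i)) * gen (u (inr j)))) N univ univ := by
  have hdeg := prod_mem_gradeOf (gen := gen) (univ.disjSum univ) u
  rw [card_disjSum, card_univ, card_univ, Fintype.card_fin, Fintype.card_fin] at hdeg
  rw [← univ_disjSum_univ, hE (k + n) _ hdeg]
  simp only [powD_apply_prod_disjSum hmul hε hζ u hll hrr]

end WickTheorem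

section AntiAlgHom

variable {A AC : Type} [CommRing A] [Algebra ℂ A] [CommRing AC] [Algebra ℂ AC] {m : A → AC}

theorem IsAntiAlgHom.map_prod (hm : IsAntiAlgHom m) {ι : Type*} (s : Finset ι) (f : ι → A) :
    m (∏ i ∈ s, f i) = ∏ i ∈ s, m (f i) :=
  _root_.map_prod (⟨⟨m, hm.2.2.2⟩, hm.2.2.1⟩ : A →* AC) f s

def IsAntiAlgHom.toLinearMap (hm : IsAntiAlgHom m) : A →ₗ⋆[ℂ] AC where
  toFun := m
  map_add' := hm.1
  map_smul' := hm.2.1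

theorem IsAntiAlgHom.sesq_eq_of_eqOn_span (hm : IsAntiAlgHom m) {s : Set A}
    (hs : Submodule.span ℂ s = ⊤) (Bf : A →ₗ⋆[ℂ] A →ₗ[ℂ] ℂ) (p : A →ₐ[ℂ] AC)
    (E : AC →ₗ⋆[ℂ] ℂ) (h : ∀ ψ ∈ s, ∀ φ ∈ s, Bf ψ φ = E (p ψ * m φ)) (φ ψ : A) :
    Bf ψ φ = E (p ψ * m φ) := by
  have hψ (ψ : A) (hψ : ψ ∈ s) (φ : A) : Bf ψ φ = E (p ψ * m φ) :=
    LinearMap.congr_fun (LinearMap.ext_on hs (f := Bf ψ)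
      (g := (E.comp (LinearMap.mulLeft ℂ (p ψ))).comp hm.toLinearMap) (h ψ hψ)) φ
  exact LinearMap.congr_fun (LinearMap.ext_on hs (f := Bf.flip φ)
    (g := (E.comp (LinearMap.mulRight ℂ (m φ))).comp p.toLinearMap) fun ψ hψ' => hψ ψ hψ' φ) ψ

end AntiAlgHom

theorem IsCanonInner.apply_prod_eq_gaussian {V A AC : Type}
    [NormedAddCommGroup V] [InnerProductSpace ℂ V]
    [CommRing A] [Algebra ℂ A] [CommRing AC] [Algebra ℂ AC]
    {ι : V →ₗ[ℂ] A} {Bf : A →ₗ⋆[ℂ] A →ₗ[ℂ] ℂ} (hB : IsCanonInner ι Bf)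
    {p : A →ₐ[ℂ] AC} {m : A → AC} (hm : IsAntiAlgHom m) {gen : V ⊕ V → AC}
    (hgen : ∀ w : V ⊕ V, gen w = Sum.elim (fun v => p (ι v)) (fun v => m (ι v)) w)
    {mul : (AC →ₗ⋆[ℂ] ℂ) → (AC →ₗ⋆[ℂ] ℂ) → (AC →ₗ⋆[ℂ] ℂ)} (hmul : IsConvProdOf gen mul)
    {ε ζ E : AC →ₗ⋆[ℂ] ℂ} (hε : IsCounitOf gen ε) (hζ : IsQuadOf gen ζ)
    (hζpm : ∀ x y : V, ζ (p (ι x) * m (ι y)) = (inner ℂ x y : ℂ))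
    (hζpp : ∀ x y : V, ζ (p (ι x) * p (ι y)) = 0)
    (hζmm : ∀ x y : V, ζ (m (ι x) * m (ι y)) = 0)
    (hE : IsGaussianOf gen mul ε ζ E) {k n : ℕ} (x : Fin k → V) (y : Fin n → V) :
    Bf (∏ i, ι (x i)) (∏ j, ι (y j)) = E (p (∏ i, ι (x i)) * m (∏ j, ι (y j))) := by
  set u : Fin k ⊕ Fin n → V ⊕ V := Sum.elim (inl ∘ x) (inr ∘ y)
  have hprod : p (∏ i, ι (x i)) * m (∏ j, ι (y j)) = ∏ c, gen (u c) := by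
    rw [map_prod, hm.map_prod, Fintype.prod_sum_type]
    simp [u, hgen]
  rw [hprod, hE.apply_prod_sum_type hmul hε hζ u (by simp [u, hgen, hζpp])
    (by simp [u, hgen, hζmm])]
  simp only [u, hgen, Sum.elim_inl, Sum.elim_inr, Function.comp_apply, hζpm]
  rcases eq_or_ne k n with rfl | hkn
  · rw [hB.2, sum_inv_factorial_mul_wick_univ _ (by omega)]
  · rw [hB.1 k n hkn, sum_inv_factorial_mul_wick_of_ne _ hkn]

theorem identity_kernel_gaussian_general {V A AC : Type}
    [NormedAddCommGroup V] [InnerProductSpace ℂ V]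
    [CommRing A] [Algebra ℂ A] [CommRing AC] [Algebra ℂ AC]
    (ι : V →ₗ[ℂ] A) (hspan : SpanProdsOf fun w => ι w)
    (Bf : A →ₗ⋆[ℂ] A →ₗ[ℂ] ℂ) (hB : IsCanonInner ι Bf)
    (p : A →ₐ[ℂ] AC) (m : A → AC) (hm : IsAntiAlgHom m)
    (gen : V ⊕ V → AC)
    (hgen : ∀ w : V ⊕ V, gen w = Sum.elim (fun v => p (ι v)) (fun v => m (ι v)) w)
    (mulC : (AC →ₗ⋆[ℂ] ℂ) → (AC →ₗ⋆[ℂ] ℂ) → (AC →ₗ⋆[ℂ] ℂ))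
    (hmulC : IsConvProdOf gen mulC)
    (εC : AC →ₗ⋆[ℂ] ℂ) (hεC : IsCounitOf gen εC)
    (ζV : AC →ₗ⋆[ℂ] ℂ) (hζq : IsQuadOf gen ζV)
    (hζpm : ∀ x y : V, ζV (p (ι x) * m (ι y)) = (inner ℂ x y : ℂ))
    (hζpp : ∀ x y : V, ζV (p (ι x) * p (ι y)) = 0)
    (hζmm : ∀ x y : V, ζV (m (ι x) * m (ι y)) = 0)
    -- the preferred Gaussian e^{Z_V}
    (E : AC →ₗ⋆[ℂ] ℂ) (hE : IsGaussianOf gen mulC εC ζV E) :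
    ∀ φ ψ : A, Bf ψ φ = E (p ψ * m φ) := by
  refine hm.sesq_eq_of_eqOn_span (Submodule.eq_top_iff'.2 hspan) Bf p E ?_
  rintro _ ⟨k, x, rfl⟩ _ ⟨n, y, rfl⟩
  exact hB.apply_prod_eq_gaussian hm hgen hmulC hεC hζq hζpm hζpp hζmm hE x y

/-- The kernel of the identity operator `I : SV → SV ⊂ SV'` is the preferred
Gaussian `e^{Z_V} = Σ ζ_Vⁿ/n! ∈ SV_ℂ'`: for all `φ, ψ ∈ SV`,
`⟨ψ|φ⟩ = e^{Z_V}(ψ₊φ₋)`. -/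
theorem identity_kernel_gaussian {V A AC : Type}
    [NormedAddCommGroup V] [InnerProductSpace ℂ V] [CompleteSpace V]
    [CommRing A] [Algebra ℂ A] [CommRing AC] [Algebra ℂ AC]
    (ι : V →ₗ[ℂ] A) (hA : IsSymmAlg ι) (hspan : SpanProdsOf fun w => ι w)
    (Bf : A →ₗ⋆[ℂ] A →ₗ[ℂ] ℂ) (hB : IsCanonInner ι Bf)
    (p : A →ₐ[ℂ] AC) (m : A → AC) (hm : IsAntiAlgHom m)
    (gen : V ⊕ V → AC)
    (hgen : ∀ w : V ⊕ V, gen w = Sum.elim (fun v => p (ι v)) (fun v => m (ι v)) w)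
    (hspanC : SpanProdsOf gen)
    (mulC : (AC →ₗ⋆[ℂ] ℂ) → (AC →ₗ⋆[ℂ] ℂ) → (AC →ₗ⋆[ℂ] ℂ))
    (hmulC : IsConvProdOf gen mulC)
    (εC : AC →ₗ⋆[ℂ] ℂ) (hεC : IsCounitOf gen εC)
    (ζV : AC →ₗ⋆[ℂ] ℂ) (hζq : IsQuadOf gen ζV)
    (hζpm : ∀ x y : V, ζV (p (ι x) * m (ι y)) = (inner ℂ x y : ℂ))
    (hζpp : ∀ x y : V, ζV (p (ι x) * p (ι y)) = 0)
    (hζmm : ∀ x y : V, ζV (m (ι x) * m (ι y)) = 0)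
    -- the preferred Gaussian e^{Z_V}
    (E : AC →ₗ⋆[ℂ] ℂ) (hE : IsGaussianOf gen mulC εC ζV E) :
    ∀ φ ψ : A, Bf ψ φ = E (p ψ * m φ) :=
  identity_kernel_gaussian_general ι hspan Bf hB p m hm gen hgen mulC hmulC εC hεC ζV hζq hζpm hζpp
    hζmm E hE
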